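/- Displacement bound for the inner fixed-point iteration of the practical algorithm (from the proof of Lemma B.2): Let H be an n×n real symmetric matrix with σ_max(H) ≤ M, U an n×N real matrix with σ_max(U) ≤ α, and s > 0 with 4·s·α²·M < 2. Define Ũ⁽⁰⁾ = U and, for k ≥ 1, Ũ⁽ᵏ⁾ = (Iₙ + (s/2)·𝒜_{Ũ⁽ᵏ⁻¹⁾})⁻¹·U (the inverse exists since 𝒜 is skew-symmetric). Then for every p ≥ 0, ‖Ũ⁽ᵖ⁾ − U‖_F ≤ (s/(2 − 4·s·α²·M))·‖𝒜_U·U‖_F. -/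

import Mathlib

open Matrix

noncomputable section

/-- The skew-symmetric commutator 𝒜_W = H·W·Wᵀ − W·Wᵀ·H. -/
def commA {n N : ℕ} (H : Matrix (Fin n) (Fin n) ℝ) (W : Matrix (Fin n) (Fin N) ℝ) :
    Matrix (Fin n) (Fin n) ℝ :=
  H * W * Wᵀ - W * Wᵀ * H

/-- Frobenius norm of a real matrix. -/
def frobNorm {m k : ℕ} (A : Matrix (Fin m) (Fin k) ℝ) : ℝ :=
  Real.sqrt (∑ i, ∑ j, (A i j) ^ 2)

/-- Largest singular value (ℓ²-operator norm) of a real matrix. -/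
def sigmaMax {m k : ℕ} (A : Matrix (Fin m) (Fin k) ℝ) : ℝ :=
  ‖LinearMap.toContinuousLinearMap (Matrix.toEuclideanLin A)‖

/-! If `H` is symmetric then `K = (s/2) 𝒜_W` is skew-symmetric, so `‖(1 + K) x‖² = ‖x‖² + ‖K x‖²`:
`1 + K` is invertible and `σ_max((1 + K)⁻¹) ≤ 1`, whence every iterate satisfies `σ_max ≤ α`.
Since `Ũ⁽ᵏ⁺¹⁾ - U = -(s/2) (1 + K)⁻¹ 𝒜_{Ũ⁽ᵏ⁾} U` and `𝒜_W U - 𝒜_U U = H Δ U - Δ H U` with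
`Δ = W Wᵀ - U Uᵀ`, `‖Δ‖_F ≤ 2α ‖W - U‖_F`, the displacements `d_k = ‖Ũ⁽ᵏ⁾ - U‖_F` satisfy
`d_{k+1} ≤ (s/2) ‖𝒜_U U‖_F + 2 s M α² d_k` and `d_0 = 0`. The claimed bound is the fixed point
of this monotone affine recursion. -/

open WithLp
open scoped RealInnerProductSpace

section Frobenius

open scoped Matrix.Norms.Frobenius

variable {m k : ℕ}

theorem frobNorm_eq_norm (A : Matrix (Fin m) (Fin k) ℝ) : frobNorm A = ‖A‖ := by
  simp only [frobNorm, frobenius_norm_def, Real.sqrt_eq_rpow, Real.rpow_two, Real.norm_eq_abs,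
    sq_abs]

theorem frobNorm_nonneg (A : Matrix (Fin m) (Fin k) ℝ) : 0 ≤ frobNorm A :=
  Real.sqrt_nonneg _

theorem frobNorm_zero : frobNorm (0 : Matrix (Fin m) (Fin k) ℝ) = 0 := by
  simp [frobNorm_eq_norm]

theorem frobNorm_neg (A : Matrix (Fin m) (Fin k) ℝ) : frobNorm (-A) = frobNorm A := by
  simp only [frobNorm_eq_norm, norm_neg]

theorem frobNorm_add_le (A B : Matrix (Fin m) (Fin k) ℝ) :
    frobNorm (A + B) ≤ frobNorm A + frobNorm B := by
  simpa only [frobNorm_eq_norm] using norm_add_le A B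

theorem frobNorm_sub_le (A B : Matrix (Fin m) (Fin k) ℝ) :
    frobNorm (A - B) ≤ frobNorm A + frobNorm B := by
  simpa only [frobNorm_eq_norm] using norm_sub_le A B

theorem frobNorm_smul (c : ℝ) (A : Matrix (Fin m) (Fin k) ℝ) :
    frobNorm (c • A) = |c| * frobNorm A := by
  simp only [frobNorm_eq_norm, norm_smul, Real.norm_eq_abs]

theorem frobNorm_transpose (A : Matrix (Fin m) (Fin k) ℝ) : frobNorm Aᵀ = frobNorm A := by
  simp only [frobNorm_eq_norm, frobenius_norm_transpose]

end Frobenius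

section L2Operator

open scoped Matrix.Norms.L2Operator

variable {m k l : ℕ}

theorem sigmaMax_eq_norm (A : Matrix (Fin m) (Fin k) ℝ) : sigmaMax A = ‖A‖ := rfl

theorem sigmaMax_nonneg (A : Matrix (Fin m) (Fin k) ℝ) : 0 ≤ sigmaMax A :=
  norm_nonneg _

theorem sigmaMax_transpose (A : Matrix (Fin m) (Fin k) ℝ) : sigmaMax Aᵀ = sigmaMax A := by
  rw [sigmaMax_eq_norm, sigmaMax_eq_norm, ← conjTranspose_eq_transpose_of_trivial,
    l2_opNorm_conjTranspose]

theorem sigmaMax_mul_le (A : Matrix (Fin m) (Fin k) ℝ) (B : Matrix (Fin k) (Fin l) ℝ) :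
    sigmaMax (A * B) ≤ sigmaMax A * sigmaMax B :=
  l2_opNorm_mul A B

theorem norm_toLp_mulVec_le (A : Matrix (Fin m) (Fin k) ℝ) (x : Fin k → ℝ) :
    ‖toLp 2 (A *ᵥ x)‖ ≤ sigmaMax A * ‖toLp 2 x‖ :=
  l2_opNorm_mulVec A (toLp 2 x)

theorem frobNorm_sq_eq_sum_norm_sq_col (X : Matrix (Fin m) (Fin k) ℝ) :
    frobNorm X ^ 2 = ∑ j, ‖toLp 2 (Xᵀ j)‖ ^ 2 := by
  rw [frobNorm, Real.sq_sqrt (by positivity), Finset.sum_comm]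
  simp [EuclideanSpace.norm_sq_eq]

theorem frobNorm_mul_le_sigmaMax_mul (A : Matrix (Fin m) (Fin k) ℝ)
    (X : Matrix (Fin k) (Fin l) ℝ) : frobNorm (A * X) ≤ sigmaMax A * frobNorm X := by
  have hcol : ∀ j, (A * X)ᵀ j = A *ᵥ Xᵀ j := fun j => by
    rw [transpose_mul, ← vecMul_transpose]; rfl
  refine le_of_pow_le_pow_left₀ two_ne_zero
    (mul_nonneg (sigmaMax_nonneg A) (frobNorm_nonneg X)) ?_
  rw [mul_pow, frobNorm_sq_eq_sum_norm_sq_col, frobNorm_sq_eq_sum_norm_sq_col, Finset.mul_sum]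
  refine Finset.sum_le_sum fun j _ => ?_
  rw [hcol, ← mul_pow]
  exact pow_le_pow_left₀ (norm_nonneg _) (norm_toLp_mulVec_le A _) 2

theorem frobNorm_mul_le_mul_sigmaMax (X : Matrix (Fin m) (Fin k) ℝ)
    (B : Matrix (Fin k) (Fin l) ℝ) : frobNorm (X * B) ≤ frobNorm X * sigmaMax B := by
  rw [← frobNorm_transpose, transpose_mul, ← frobNorm_transpose X, ← sigmaMax_transpose B,
    mul_comm]
  exact frobNorm_mul_le_sigmaMax_mul _ _

end L2Operator

section Skew

variable {n : ℕ} {K : Matrix (Fin n) (Fin n) ℝ}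

theorem inner_toLp_mulVec_eq_zero (hK : Kᵀ = -K) (x : Fin n → ℝ) :
    ⟪toLp 2 x, toLp 2 (K *ᵥ x)⟫ = 0 := by
  have h : x ⬝ᵥ K *ᵥ x = -(K *ᵥ x ⬝ᵥ x) := by
    rw [dotProduct_mulVec, ← mulVec_transpose, hK, neg_mulVec, neg_dotProduct]
  rw [EuclideanSpace.inner_toLp_toLp]
  simp only [star_trivial]
  linarith [dotProduct_comm (K *ᵥ x) x]

theorem norm_toLp_le_norm_toLp_one_add_mulVec (hK : Kᵀ = -K) (x : Fin n → ℝ) :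
    ‖toLp 2 x‖ ≤ ‖toLp 2 ((1 + K) *ᵥ x)‖ := by
  have h : ‖toLp 2 ((1 + K) *ᵥ x)‖ ^ 2 = ‖toLp 2 x‖ ^ 2 + ‖toLp 2 (K *ᵥ x)‖ ^ 2 := by
    rw [add_mulVec, one_mulVec, toLp_add, norm_add_sq_real, inner_toLp_mulVec_eq_zero hK]
    ring
  refine le_of_pow_le_pow_left₀ two_ne_zero (norm_nonneg _) ?_
  rw [h]
  exact le_add_of_nonneg_right (sq_nonneg _)

theorem isUnit_one_add_of_transpose_eq_neg (hK : Kᵀ = -K) : IsUnit (1 + K) := by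
  rw [← mulVec_injective_iff_isUnit]
  intro x y hxy
  have h := norm_toLp_le_norm_toLp_one_add_mulVec hK (x - y)
  rw [mulVec_sub, hxy, sub_self, toLp_zero, norm_zero, norm_le_zero_iff] at h
  simpa [sub_eq_zero] using h

theorem sigmaMax_inv_one_add_le_one (hK : Kᵀ = -K) : sigmaMax (1 + K)⁻¹ ≤ 1 := by
  have hdet := (isUnit_iff_isUnit_det _).mp (isUnit_one_add_of_transpose_eq_neg hK)
  refine ContinuousLinearMap.opNorm_le_bound _ zero_le_one fun v => ?_
  have h := norm_toLp_le_norm_toLp_one_add_mulVec hK ((1 + K)⁻¹ *ᵥ ofLp v)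
  rw [mulVec_mulVec, mul_nonsing_inv _ hdet, one_mulVec, toLp_ofLp] at h
  simpa [toLpLin_apply] using h

theorem sigmaMax_inv_one_add_mul_le (hK : Kᵀ = -K) {N : ℕ} (U : Matrix (Fin n) (Fin N) ℝ) :
    sigmaMax ((1 + K)⁻¹ * U) ≤ sigmaMax U :=
  (sigmaMax_mul_le _ _).trans <|
    mul_le_of_le_one_left (sigmaMax_nonneg U) (sigmaMax_inv_one_add_le_one hK)

end Skew

theorem inv_one_add_mul_sub_self {ι κ R : Type*} [Fintype ι] [DecidableEq ι] [CommRing R]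
    {K : Matrix ι ι R} (hK : IsUnit (1 + K)) (U : Matrix ι κ R) :
    (1 + K)⁻¹ * U - U = -((1 + K)⁻¹ * (K * U)) := by
  have hinv : (1 + K)⁻¹ * (1 + K) = 1 := nonsing_inv_mul _ ((isUnit_iff_isUnit_det _).mp hK)
  calc (1 + K)⁻¹ * U - U = (1 + K)⁻¹ * U - (1 + K)⁻¹ * ((1 + K) * U) := by
        rw [← Matrix.mul_assoc, hinv, Matrix.one_mul]
    _ = -((1 + K)⁻¹ * (K * U)) := by
        rw [← Matrix.mul_sub, Matrix.add_mul, Matrix.one_mul, sub_add_cancel_left, Matrix.mul_neg]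

section Commutator

variable {n N : ℕ} {H : Matrix (Fin n) (Fin n) ℝ} {M α : ℝ}

theorem commA_transpose (hH : H.IsSymm) (W : Matrix (Fin n) (Fin N) ℝ) :
    (commA H W)ᵀ = -commA H W := by
  simp only [commA, transpose_sub, transpose_mul, transpose_transpose, hH.eq, Matrix.mul_assoc]
  abel

theorem smul_commA_transpose (hH : H.IsSymm) (c : ℝ) (W : Matrix (Fin n) (Fin N) ℝ) :
    (c • commA H W)ᵀ = -(c • commA H W) := by
  rw [transpose_smul, commA_transpose hH, smul_neg]

theorem commA_mul_sub_commA_mul (W U : Matrix (Fin n) (Fin N) ℝ) :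
    commA H W * U - commA H U * U =
      H * ((W * Wᵀ - U * Uᵀ) * U) - (W * Wᵀ - U * Uᵀ) * (H * U) := by
  simp only [commA, Matrix.sub_mul, Matrix.mul_sub, Matrix.mul_assoc]
  abel

theorem frobNorm_mul_transpose_sub_le {W U : Matrix (Fin n) (Fin N) ℝ} (hW : sigmaMax W ≤ α)
    (hU : sigmaMax U ≤ α) : frobNorm (W * Wᵀ - U * Uᵀ) ≤ 2 * α * frobNorm (W - U) := by
  have hsplit : W * Wᵀ - U * Uᵀ = (W - U) * Wᵀ + U * (W - U)ᵀ := by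
    rw [Matrix.sub_mul, transpose_sub, Matrix.mul_sub]
    abel
  have hd := frobNorm_nonneg (W - U)
  calc frobNorm (W * Wᵀ - U * Uᵀ)
      ≤ frobNorm (W - U) * sigmaMax Wᵀ + sigmaMax U * frobNorm (W - U)ᵀ := by
        rw [hsplit]
        exact (frobNorm_add_le _ _).trans <| add_le_add
          (frobNorm_mul_le_mul_sigmaMax _ _) (frobNorm_mul_le_sigmaMax_mul _ _)
    _ ≤ frobNorm (W - U) * α + α * frobNorm (W - U) := by
        rw [sigmaMax_transpose, frobNorm_transpose]
        gcongr
    _ = 2 * α * frobNorm (W - U) := by ring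

theorem frobNorm_commA_mul_sub_commA_mul_le (hM : sigmaMax H ≤ M)
    {W U : Matrix (Fin n) (Fin N) ℝ} (hW : sigmaMax W ≤ α) (hU : sigmaMax U ≤ α) :
    frobNorm (commA H W * U - commA H U * U) ≤ 4 * M * α ^ 2 * frobNorm (W - U) := by
  set Δ := W * Wᵀ - U * Uᵀ
  have hα : 0 ≤ α := (sigmaMax_nonneg U).trans hU
  have hM0 : 0 ≤ M := (sigmaMax_nonneg H).trans hM
  have hΔ := frobNorm_mul_transpose_sub_le hW hU
  have hHU : sigmaMax (H * U) ≤ M * α :=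
    (sigmaMax_mul_le H U).trans (mul_le_mul hM hU (sigmaMax_nonneg U) hM0)
  calc frobNorm (commA H W * U - commA H U * U)
      ≤ sigmaMax H * (frobNorm Δ * sigmaMax U) + frobNorm Δ * sigmaMax (H * U) := by
        rw [commA_mul_sub_commA_mul]
        refine (frobNorm_sub_le _ _).trans (add_le_add ?_ (frobNorm_mul_le_mul_sigmaMax _ _))
        exact (frobNorm_mul_le_sigmaMax_mul _ _).trans <| mul_le_mul_of_nonneg_left
          (frobNorm_mul_le_mul_sigmaMax _ _) (sigmaMax_nonneg H)
    _ ≤ M * (2 * α * frobNorm (W - U) * α) + 2 * α * frobNorm (W - U) * (M * α) := by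
        have := frobNorm_nonneg Δ
        have := frobNorm_nonneg (W - U)
        have := sigmaMax_nonneg U
        have := sigmaMax_nonneg (H * U)
        gcongr
    _ = 4 * M * α ^ 2 * frobNorm (W - U) := by ring

theorem frobNorm_inv_one_add_smul_commA_mul_sub_le (hH : H.IsSymm) {s : ℝ}
    (hM : sigmaMax H ≤ M) (hs : 0 ≤ s) {W U : Matrix (Fin n) (Fin N) ℝ} (hW : sigmaMax W ≤ α)
    (hU : sigmaMax U ≤ α) :
    frobNorm ((1 + (s / 2) • commA H W)⁻¹ * U - U) ≤
      s / 2 * frobNorm (commA H U * U) + 2 * s * M * α ^ 2 * frobNorm (W - U) := by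
  set K := (s / 2) • commA H W
  have hK : Kᵀ = -K := smul_commA_transpose hH _ W
  calc frobNorm ((1 + K)⁻¹ * U - U)
      = s / 2 * frobNorm ((1 + K)⁻¹ * (commA H W * U)) := by
        rw [inv_one_add_mul_sub_self (isUnit_one_add_of_transpose_eq_neg hK), frobNorm_neg,
          Matrix.smul_mul, Matrix.mul_smul, frobNorm_smul, abs_of_nonneg (by positivity)]
    _ ≤ s / 2 * frobNorm (commA H W * U) := by
        gcongr
        exact (frobNorm_mul_le_sigmaMax_mul _ _).trans <| mul_le_of_le_one_left
          (frobNorm_nonneg _) (sigmaMax_inv_one_add_le_one hK)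
    _ ≤ s / 2 * (frobNorm (commA H U * U) + frobNorm (commA H W * U - commA H U * U)) := by
        gcongr
        simpa using frobNorm_add_le (commA H U * U) (commA H W * U - commA H U * U)
    _ ≤ s / 2 * (frobNorm (commA H U * U) + 4 * M * α ^ 2 * frobNorm (W - U)) := by
        grw [frobNorm_commA_mul_sub_commA_mul_le hM hW hU]
    _ = s / 2 * frobNorm (commA H U * U) + 2 * s * M * α ^ 2 * frobNorm (W - U) := by ring

end Commutator

/-- Displacement bound for the inner fixed-point iteration of the practical
algorithm (from the proof of Lemma B.2). -/
theorem inner_iteration_displacement_bound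
    {n N : ℕ} (H : Matrix (Fin n) (Fin n) ℝ) (hH : H.IsSymm)
    (M α : ℝ) (hM : sigmaMax H ≤ M)
    (U : Matrix (Fin n) (Fin N) ℝ) (hU : sigmaMax U ≤ α)
    (s : ℝ) (hs : 0 < s) (hsmall : 4 * s * α ^ 2 * M < 2)
    (Ut : ℕ → Matrix (Fin n) (Fin N) ℝ)
    (h0 : Ut 0 = U)
    (hrec : ∀ k, Ut (k + 1) = (1 + (s / 2) • commA H (Ut k))⁻¹ * U) :
    ∀ p : ℕ, frobNorm (Ut p - U) ≤ s / (2 - 4 * s * α ^ 2 * M) * frobNorm (commA H U * U) := by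
  have hM0 : 0 ≤ M := (sigmaMax_nonneg H).trans hM
  have hden : 0 < 2 - 4 * s * α ^ 2 * M := by linarith
  have hσ : ∀ k, sigmaMax (Ut k) ≤ α
    | 0 => h0 ▸ hU
    | k + 1 => hrec k ▸ (sigmaMax_inv_one_add_mul_le (smul_commA_transpose hH _ _) U).trans hU
  set F := frobNorm (commA H U * U)
  intro p
  refine ((monotone_id.const_mul (by positivity : 0 ≤ 2 * s * M * α ^ 2)).const_add
    (s / 2 * F)).seq_le_seq p (x := fun k => frobNorm (Ut k - U))
    (y := fun _ => s / (2 - 4 * s * α ^ 2 * M) * F) ?_ ?_ ?_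
  · show frobNorm (Ut 0 - U) ≤ _
    rw [h0, sub_self, frobNorm_zero]
    exact mul_nonneg (div_pos hs hden).le (frobNorm_nonneg _)
  · exact fun k _ => hrec k ▸ frobNorm_inv_one_add_smul_commA_mul_sub_le hH hM hs.le (hσ k) hU
  · refine fun _ _ => le_of_eq ?_
    dsimp only [id]
    linear_combination (-(F / 2)) * div_mul_cancel₀ s hden.ne'
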